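/- arXiv:2203.13435 — 4 statements merged into one kernel-verified Lean document; each statement's English description precedes it below -/
import Mathlib

section
/- Let G be a directed acyclic graph and I⁰, Iᵗ independent sets of size k in the underlying graph of G. In every reconfiguration sequence from I⁰ to Iᵗ under directed token sliding, each token visits each vertex at most once; consequently, every reconfiguration sequence has length at most k·|V(G)|. -/
open scoped Classical

variable {V : Type*}

/-- The underlying undirected simple graph of a digraph given by its arc relation. -/
def underlying (A : V → V → Prop) : SimpleGraph V := SimpleGraph.fromRel A

/-- A polytree: a loopless digraph without antiparallel arcs whose underlying graph is a tree. -/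
def IsPolytree (A : V → V → Prop) : Prop :=
  (∀ v, ¬ A v v) ∧ (∀ u v, A u v → ¬ A v u) ∧ (underlying A).IsTree

/-- `x` lies in the weakly connected component of `T - (a,b)` containing the tail `a`. -/
def InCminus (A : V → V → Prop) (a b x : V) : Prop :=
  ((underlying A).deleteEdges {s(a, b)}).Reachable a x

/-- `w((a,b); X, Y) = |C⁻ ∩ X| - |C⁻ ∩ Y|`. -/
noncomputable def wArc [Fintype V] [DecidableEq V] (A : V → V → Prop)
    (X Y : Finset V) (a b : V) : ℤ :=
  ((X.filter fun x => InCminus A a b x).card : ℤ) -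
    ((Y.filter fun x => InCminus A a b x).card : ℤ)

/-- Independence in the underlying undirected graph. -/
def IndepF (A : V → V → Prop) (I : Finset V) : Prop :=
  ∀ u ∈ I, ∀ v ∈ I, ¬ (underlying A).Adj u v

/-- One token-sliding step along an arc, in its direction. -/
def IsStep [DecidableEq V] (A : V → V → Prop) (I J : Finset V) : Prop :=
  ∃ u v, A u v ∧ I \ J = {u} ∧ J \ I = {v}

/-- A reconfiguration sequence of independent sets under directed token sliding. -/
def IsReconfSeq [DecidableEq V] (A : V → V → Prop) {ℓ : ℕ}
    (f : Fin (ℓ + 1) → Finset V) : Prop :=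
  (∀ i, IndepF A (f i)) ∧ ∀ i : Fin ℓ, IsStep A (f i.castSucc) (f i.succ)

/-- `I` is reconfigurable into `J` under directed token sliding. -/
def Reconfigurable [DecidableEq V] (A : V → V → Prop) (I J : Finset V) : Prop :=
  ∃ (ℓ : ℕ) (f : Fin (ℓ + 1) → Finset V),
    IsReconfSeq A f ∧ f 0 = I ∧ f (Fin.last ℓ) = J

/-- A directed path in the digraph `A`, given by its (distinct) vertices in order. -/
structure DirPath (A : V → V → Prop) where
  len : ℕ
  vtx : Fin (len + 1) → V
  inj : Function.Injective vtx
  arc : ∀ i : Fin len, A (vtx i.castSucc) (vtx i.succ)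

namespace DirPath
variable {A : V → V → Prop}
/-- The source of a directed path. -/
def src (p : DirPath A) : V := p.vtx 0
/-- The sink of a directed path. -/
def snk (p : DirPath A) : V := p.vtx (Fin.last p.len)
/-- The second vertex `s'(P)` of a directed path. -/
def sndVtx (p : DirPath A) : V := p.vtx ⟨min 1 p.len, by omega⟩
/-- The second-to-last vertex `t'(P)` of a directed path. -/
def penVtx (p : DirPath A) : V := p.vtx ⟨p.len - 1, by omega⟩
/-- `v` is a vertex of the path `p`. -/
def mem (p : DirPath A) (v : V) : Prop := ∃ i, p.vtx i = v
/-- `x` is an internal vertex of `p` (neither source nor sink). -/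
def internal (p : DirPath A) (x : V) : Prop :=
  ∃ i : Fin (p.len + 1), p.vtx i = x ∧ i ≠ 0 ∧ i ≠ Fin.last p.len
end DirPath

/-- A directed path matching from `X` to `Y`: distinct sources forming `X`,
distinct sinks forming `Y`. -/
def IsDPM [DecidableEq V] {A : V → V → Prop} {k : ℕ}
    (X Y : Finset V) (P : Fin k → DirPath A) : Prop :=
  (Function.Injective fun i => (P i).src) ∧ (Function.Injective fun i => (P i).snk) ∧
  (Finset.univ.image fun i => (P i).src) = X ∧ (Finset.univ.image fun i => (P i).snk) = Y

/-- The path-set conditions (P1)–(P4). -/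
def PathSetConds [DecidableEq V] {A : V → V → Prop} {k : ℕ}
    (X Y : Finset V) (P : Fin k → DirPath A) : Prop :=
  (∀ i, 2 ≤ (P i).len) ∧ IsDPM X Y P ∧
  (∀ i j, i ≠ j → (P i).sndVtx ≠ (P j).sndVtx) ∧
  (∀ i j, i ≠ j → (P i).penVtx ≠ (P j).penVtx)

/-- Length of the (unique, when it exists) directed path from `u` to `v`. -/
noncomputable def ddist (A : V → V → Prop) (u v : V) : ℕ :=
  sInf {n | ∃ p : DirPath A, p.src = u ∧ p.snk = v ∧ p.len = n}

/-- A biased path pair: a common internal vertex `x` with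
`dist(s(p),x) > dist(s(q),x)` and `dist(x,t(p)) > dist(x,t(q))`. -/
def BiasedPair (A : V → V → Prop) (p q : DirPath A) : Prop :=
  ∃ x, p.internal x ∧ q.internal x ∧
    ddist A q.src x < ddist A p.src x ∧ ddist A x q.snk < ddist A x p.snk

/-- A rigid token: `v ∈ X ∩ Y` and all incident arcs have `w`-value `0`. -/
def RigidTok [Fintype V] [DecidableEq V] (A : V → V → Prop) (X Y : Finset V) (v : V) : Prop :=
  v ∈ X ∧ v ∈ Y ∧ ∀ a b, A a b → (a = v ∨ b = v) → wArc A X Y a b = 0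

/-- A blocking arc: `w((u,v)) = 1` and every other arc incident to `u` or `v`
has `w`-value `0`. -/
def BlockingArc [Fintype V] [DecidableEq V] (A : V → V → Prop) (X Y : Finset V)
    (u v : V) : Prop :=
  A u v ∧ wArc A X Y u v = 1 ∧
    ∀ a b, A a b → (a, b) ≠ (u, v) → (a = u ∨ b = u ∨ a = v ∨ b = v) →
      wArc A X Y a b = 0

/-- A trajectory of a single token along a reconfiguration sequence. -/
def IsTrajectory [DecidableEq V] (A : V → V → Prop) {ℓ : ℕ}
    (f : Fin (ℓ + 1) → Finset V) (g : Fin (ℓ + 1) → V) : Prop :=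
  (∀ i, g i ∈ f i) ∧ ∀ i : Fin ℓ,
    g i.succ = g i.castSucc ∨
      (f i.castSucc \ f i.succ = {g i.castSucc} ∧ f i.succ \ f i.castSucc = {g i.succ})

/-- Number of steps of a reconfiguration sequence sliding a token from `u` to `v`. -/
noncomputable def movesAlong [DecidableEq V] {ℓ : ℕ} (f : Fin (ℓ + 1) → Finset V)
    (u v : V) : ℕ :=
  (Finset.univ.filter fun i : Fin ℓ =>
    f i.castSucc \ f i.succ = {u} ∧ f i.succ \ f i.castSucc = {v}).card

/-- Number of forward arc traversals of a walk with vertex list `l`. -/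
noncomputable def fwdCount (A : V → V → Prop) (l : List V) : ℕ :=
  (l.zip l.tail).countP fun p => decide (A p.1 p.2)

/-- Number of reverse arc traversals of a walk with vertex list `l`. -/
noncomputable def revCount (A : V → V → Prop) (l : List V) : ℕ :=
  (l.zip l.tail).countP fun p => decide (A p.2 p.1)

/-- Number of traversals of the ordered pair `(a, b)` by a walk with vertex list `l`. -/
def traverseCount [DecidableEq V] (l : List V) (a b : V) : ℕ :=
  (l.zip l.tail).count (a, b)

/-- A vertex `v` touches a directed path `p` if `N[v]` meets the vertex set of `p`. -/
def Touches (A : V → V → Prop) (v : V) (p : DirPath A) : Prop :=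
  ∃ u, p.mem u ∧ (u = v ∨ (underlying A).Adj v u)

/-- Independence in an undirected graph (for undirected token sliding). -/
def UIndep (G : SimpleGraph V) (I : Finset V) : Prop :=
  ∀ u ∈ I, ∀ v ∈ I, ¬ G.Adj u v

/-- One undirected token-sliding step along an edge. -/
def UIsStep [DecidableEq V] (G : SimpleGraph V) (I J : Finset V) : Prop :=
  ∃ u v, G.Adj u v ∧ I \ J = {u} ∧ J \ I = {v}

/-- Reconfigurability under (undirected) token sliding. -/
def UReconfigurable [DecidableEq V] (G : SimpleGraph V) (I J : Finset V) : Prop :=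
  ∃ (ℓ : ℕ) (f : Fin (ℓ + 1) → Finset V),
    (∀ i, UIndep G (f i)) ∧ (∀ i : Fin ℓ, UIsStep G (f i.castSucc) (f i.succ)) ∧
    f 0 = I ∧ f (Fin.last ℓ) = J

/-- Rank of a vertex: number of strict ancestors. -/
noncomputable def dagRank [Fintype V] (A : V → V → Prop) (v : V) : ℕ :=
  (Finset.univ.filter fun u => Relation.TransGen A u v).card

lemma dagRank_lt [Fintype V] {A : V → V → Prop}
    (hDAG : ∀ v, ¬ Relation.TransGen A v v) {u v : V} (h : A u v) :
    dagRank A u < dagRank A v := by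
  classical
  apply Finset.card_lt_card
  constructor
  · intro x hx
    simp only [Finset.mem_filter, Finset.mem_univ, true_and] at hx ⊢
    exact hx.tail h
  · intro hsub
    have hu : u ∈ Finset.univ.filter fun x => Relation.TransGen A x v := by
      simp [Relation.TransGen.single h]
    have := hsub hu
    simp only [Finset.mem_filter, Finset.mem_univ, true_and] at this
    exact hDAG u this

lemma step_aux [DecidableEq V] {I J : Finset V} {u v : V}
    (h1 : I \ J = {u}) (h2 : J \ I = {v}) :
    u ∈ I ∧ u ∉ J ∧ v ∈ J ∧ v ∉ I ∧ I.erase u = J.erase v := by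
  have hu : u ∈ I \ J := by rw [h1]; exact Finset.mem_singleton_self u
  have hv : v ∈ J \ I := by rw [h2]; exact Finset.mem_singleton_self v
  rw [Finset.mem_sdiff] at hu hv
  refine ⟨hu.1, hu.2, hv.1, hv.2, ?_⟩
  ext x
  simp only [Finset.mem_erase]
  constructor
  · rintro ⟨hxu, hxI⟩
    have hxJ : x ∈ J := by
      by_contra hxJ
      have : x ∈ I \ J := Finset.mem_sdiff.2 ⟨hxI, hxJ⟩
      rw [h1, Finset.mem_singleton] at this; exact hxu this
    refine ⟨?_, hxJ⟩
    rintro rfl; exact hv.2 hxI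
  · rintro ⟨hxv, hxJ⟩
    have hxI : x ∈ I := by
      by_contra hxI
      have : x ∈ J \ I := Finset.mem_sdiff.2 ⟨hxJ, hxI⟩
      rw [h2, Finset.mem_singleton] at this; exact hxv this
    refine ⟨?_, hxI⟩
    rintro rfl; exact hu.2 hxJ

lemma step_sum [Fintype V] [DecidableEq V] {A : V → V → Prop}
    (hDAG : ∀ v, ¬ Relation.TransGen A v v) {I J : Finset V}
    (h : IsStep A I J) :
    (∑ x ∈ I, dagRank A x) + 1 ≤ ∑ x ∈ J, dagRank A x := by
  obtain ⟨u, v, hA, h1, h2⟩ := h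
  obtain ⟨huI, -, hvJ, -, he⟩ := step_aux h1 h2
  have hI : ∑ x ∈ I, dagRank A x = dagRank A u + ∑ x ∈ I.erase u, dagRank A x :=
    (Finset.add_sum_erase _ _ huI).symm
  have hJ : ∑ x ∈ J, dagRank A x = dagRank A v + ∑ x ∈ J.erase v, dagRank A x :=
    (Finset.add_sum_erase _ _ hvJ).symm
  rw [hI, hJ, he]
  have := dagRank_lt hDAG hA
  omega

/-- On a DAG, in every reconfiguration sequence each token visits
each vertex at most once (its trajectory never returns to a vertex it left);
consequently every reconfiguration sequence has length at most `k • |V|`. -/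
theorem stmt_13 [Fintype V] [DecidableEq V] (A : V → V → Prop)
    (hDAG : ∀ v, ¬ Relation.TransGen A v v)
    (I0 It : Finset V) (h0 : IndepF A I0) (ht : IndepF A It) (hcard : I0.card = It.card)
    {ℓ : ℕ} (f : Fin (ℓ + 1) → Finset V) (hf : IsReconfSeq A f)
    (hstart : f 0 = I0) (hend : f (Fin.last ℓ) = It) :
    (∀ g : Fin (ℓ + 1) → V, IsTrajectory A f g →
      ∀ i m j : Fin (ℓ + 1), i ≤ m → m ≤ j → g i = g j → g m = g i) ∧
    ℓ ≤ I0.card * Fintype.card V := by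
  obtain ⟨hind, hstep⟩ := hf
  constructor
  · intro g hg i m j him hmj hij
    obtain ⟨hmem, htraj⟩ := hg
    have key : ∀ n : ℕ, (hn : n ≤ ℓ) → ∀ p : ℕ, (hp : p ≤ n) →
        Relation.ReflTransGen A (g ⟨p, by omega⟩) (g ⟨n, by omega⟩) := by
      intro n
      induction n with
      | zero => intro _ p hp; interval_cases p; exact Relation.ReflTransGen.refl
      | succ n ih =>
        intro hn p hp
        rcases Nat.lt_or_ge p (n + 1) with hlt | hge
        · have hrec := ih (by omega) p (by omega)
          have hstepn := htraj ⟨n, by omega⟩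
          rcases hstepn with heq | ⟨hs1, hs2⟩
          · have : g (⟨n, by omega⟩ : Fin ℓ).succ = g (⟨n, by omega⟩ : Fin ℓ).castSucc := heq
            simp only [Fin.succ, Fin.castSucc, Fin.castAdd, Fin.castLE] at this
            rw [show (⟨n + 1, by omega⟩ : Fin (ℓ + 1)) = (⟨n, by omega⟩ : Fin ℓ).succ from rfl,
              heq]
            exact hrec
          · obtain ⟨u, v, hA, h1, h2⟩ := hstep ⟨n, by omega⟩
            have hu : u = g (⟨n, by omega⟩ : Fin ℓ).castSucc := by
              have := h1.symm.trans hs1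
              exact Finset.singleton_injective this
            have hv : v = g (⟨n, by omega⟩ : Fin ℓ).succ := by
              have := h2.symm.trans hs2
              exact Finset.singleton_injective this
            subst hu hv
            exact hrec.tail hA
        · have : p = n + 1 := by omega
          subst this
          exact Relation.ReflTransGen.refl
    by_contra hne
    have h1 : Relation.ReflTransGen A (g i) (g m) := by
      have := key m.val (Nat.lt_succ_iff.mp m.isLt) i.val him
      simpa using this
    have h2 : Relation.ReflTransGen A (g m) (g j) := by
      have := key j.val (Nat.lt_succ_iff.mp j.isLt) m.val hmj
      simpa using this
    have h1' : Relation.TransGen A (g i) (g m) := by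
      rcases (Relation.reflTransGen_iff_eq_or_transGen.mp h1) with h | h
      · exact absurd h hne
      · exact h
    have : Relation.TransGen A (g i) (g i) := by
      have := Relation.TransGen.trans_left h1' h2
      rwa [← hij] at this
    exact hDAG _ this
  · have key : ∀ n : ℕ, (hn : n ≤ ℓ) → n ≤ ∑ x ∈ f ⟨n, by omega⟩, dagRank A x := by
      intro n
      induction n with
      | zero => intro _; exact Nat.zero_le _
      | succ n ih =>
        intro hn
        have h1 := ih (by omega)
        have h2 := step_sum hDAG (hstep ⟨n, by omega⟩)
        have : (⟨n, by omega⟩ : Fin ℓ).castSucc = (⟨n, by omega⟩ : Fin (ℓ + 1)) := rfl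
        rw [this] at h2
        have : (⟨n, by omega⟩ : Fin ℓ).succ = (⟨n + 1, by omega⟩ : Fin (ℓ + 1)) := rfl
        rw [this] at h2
        omega
    have hl := key ℓ le_rfl
    have : (⟨ℓ, by omega⟩ : Fin (ℓ + 1)) = Fin.last ℓ := rfl
    rw [this, hend] at hl
    have hbound : ∑ x ∈ It, dagRank A x ≤ It.card * Fintype.card V := by
      apply Finset.sum_le_card_nsmul
      intro x _
      exact (Finset.card_filter_le _ _).trans (le_of_eq (Finset.card_univ))
    rw [hcard]
    omega
end

section
/- Undirected token sliding reduces to directed token sliding on oriented graphs: for any undirected graph G with independent sets I⁰, Iᵗ, construct the oriented graph G' with vertex set {v₁, v₂ : v ∈ V(G)}, arcs (v₁, v₂) for each v ∈ V(G), and for each edge {u, v} ∈ E(G) the arcs (u₁, v₁), (v₁, u₂), (u₂, v₂), (v₂, u₁). Set J⁰ = {v₁ : v ∈ I⁰} and Jᵗ = {v₁ : v ∈ Iᵗ}. Then I⁰ is reconfigurable into Iᵗ in G under (undirected) token sliding if and only if J⁰ is reconfigurable into Jᵗ in G' under directed token sliding. -/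
open scoped Classical

variable {V : Type*}

/-- The oriented graph `G'` of the reduction: two copies `(v, false) = v₁` and
`(v, true) = v₂` of each vertex, arcs `(v₁, v₂)`, and for each edge of `G`
oriented as `D u v` the arcs `(u₁,v₁), (u₂,v₂), (v₁,u₂), (v₂,u₁)`. -/
def A14 {V : Type*} (D : V → V → Prop) (p q : V × Bool) : Prop :=
  (p.1 = q.1 ∧ p.2 = false ∧ q.2 = true) ∨
  (D p.1 q.1 ∧ p.2 = q.2) ∨ (D q.1 p.1 ∧ p.2 ≠ q.2)

/-!
Identify `v` with its first copy `v₁ = (v, false)`. An independent set of `G'` contains at most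
one copy of each vertex, and copies of distinct vertices are adjacent in `G'` exactly when the
vertices are adjacent in `G`. Hence projecting to `V` sends independent sets of `G'` to
independent sets of `G`, and a directed slide either keeps the projection (`v₁ → v₂`) or becomes
a slide along an edge of `G`. Conversely, a slide `u → v` in `G` is the arc `(u₁, v₁)` when `D`
orients the edge as `u → v`, and otherwise the two arcs `(u₁, u₂)`, `(u₂, v₁)`.
-/

def ReconfStep {β : Type*} (P : β → Prop) (S : β → β → Prop) (X Y : β) : Prop :=
  P X ∧ P Y ∧ S X Y

theorem exists_fin_seq_iff_reflTransGen {β : Type*} (P : β → Prop) (S : β → β → Prop)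
    (I J : β) :
    (∃ (ℓ : ℕ) (f : Fin (ℓ + 1) → β), (∀ i, P (f i)) ∧
        (∀ i : Fin ℓ, S (f i.castSucc) (f i.succ)) ∧ f 0 = I ∧ f (Fin.last ℓ) = J) ↔
      P I ∧ Relation.ReflTransGen (ReconfStep P S) I J := by
  constructor
  · rintro ⟨ℓ, f, hP, hS, rfl, rfl⟩
    refine ⟨hP 0, ?_⟩
    have reach : ∀ i, Relation.ReflTransGen (ReconfStep P S) (f 0) (f i) := by
      intro i
      induction i using Fin.induction with
      | zero => exact .refl
      | succ j ih => exact ih.tail ⟨hP _, hP _, hS j⟩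
    exact reach (Fin.last ℓ)
  · rintro ⟨hI, h⟩
    induction h with
    | refl => exact ⟨0, fun _ => I, fun _ => hI, fun i => i.elim0, rfl, rfl⟩
    | @tail X Y _ hXY ih =>
      obtain ⟨ℓ, f, hP, hS, h0, hl⟩ := ih
      refine ⟨ℓ + 1, Fin.snoc f Y, ?_, ?_, ?_, by simp⟩
      · intro i
        induction i using Fin.lastCases with
        | last => simpa using hXY.2.1
        | cast j => simpa using hP j
      · intro i
        induction i using Fin.lastCases with
        | last =>
          rw [Fin.succ_last, Fin.snoc_last, Fin.snoc_castSucc, hl]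
          exact hXY.2.2
        | cast j =>
          rw [Fin.succ_castSucc, Fin.snoc_castSucc, Fin.snoc_castSucc]
          exact hS j
      · rw [← Fin.castSucc_zero, Fin.snoc_castSucc, h0]

theorem sdiff_eq_singleton_and_sdiff_eq_singleton_iff {α : Type*} [DecidableEq α]
    {I J : Finset α} {u v : α} :
    I \ J = {u} ∧ J \ I = {v} ↔ u ∈ I ∧ v ∉ I ∧ J = insert v (I.erase u) := by
  simp only [Finset.ext_iff, Finset.mem_sdiff, Finset.mem_singleton, Finset.mem_insert,
    Finset.mem_erase]
  grind

theorem Finset.image_erase_of_injOn {α β : Type*} [DecidableEq α] [DecidableEq β] {f : α → β}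
    {s : Finset α} (hf : Set.InjOn f s) {a : α} (ha : a ∈ s) :
    (s.erase a).image f = (s.image f).erase (f a) := by
  grind [Set.InjOn]

section Reduction

variable {G : SimpleGraph V} {D : V → V → Prop}

theorem A14_fst_eq_or_adj (hD1 : ∀ u v, D u v → G.Adj u v) {p q : V × Bool}
    (h : A14 D p q) : p.1 = q.1 ∨ G.Adj p.1 q.1 := by
  rcases h with ⟨h, -⟩ | ⟨h, -⟩ | ⟨h, -⟩
  exacts [.inl h, .inr (hD1 _ _ h), .inr (hD1 _ _ h).symm]

theorem underlying_A14_adj_iff (hD1 : ∀ u v, D u v → G.Adj u v)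
    (hD2 : ∀ u v, G.Adj u v → D u v ∨ D v u) (p q : V × Bool) :
    (underlying (A14 D)).Adj p q ↔ (p.1 = q.1 ∧ p.2 ≠ q.2) ∨ G.Adj p.1 q.1 := by
  rw [underlying, SimpleGraph.fromRel_adj]
  constructor
  · rintro ⟨hne, hpq | hqp⟩
    · exact (A14_fst_eq_or_adj hD1 hpq).imp_left fun h => ⟨h, fun h' => hne (Prod.ext h h')⟩
    · exact (A14_fst_eq_or_adj hD1 hqp).imp
        (fun h => ⟨h.symm, fun h' => hne (Prod.ext h.symm h')⟩) SimpleGraph.Adj.symm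
  · rintro (⟨h1, h2⟩ | hadj)
    · refine ⟨fun h => h2 (congrArg Prod.snd h), ?_⟩
      obtain ⟨u, b⟩ := p
      obtain ⟨v, c⟩ := q
      cases b <;> cases c <;> simp_all [A14]
    · refine ⟨fun h => hadj.ne (congrArg Prod.fst h), ?_⟩
      unfold A14
      rcases hD2 _ _ hadj with hd | hd <;> by_cases h2 : p.2 = q.2 <;> grind

theorem indepF_A14_image_iff [DecidableEq V] (hD1 : ∀ u v, D u v → G.Adj u v)
    (hD2 : ∀ u v, G.Adj u v → D u v ∨ D v u) (c : V → Bool) (X : Finset V) :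
    IndepF (A14 D) (X.image fun x => (x, c x)) ↔ UIndep G X := by
  simp only [IndepF, UIndep, Finset.forall_mem_image, underlying_A14_adj_iff hD1 hD2]
  refine forall₂_congr fun x _ => forall₂_congr fun y _ => ?_
  rw [or_iff_right (by rintro ⟨rfl, h⟩; exact h rfl)]

theorem IndepF.injOn_fst (hD1 : ∀ u v, D u v → G.Adj u v)
    (hD2 : ∀ u v, G.Adj u v → D u v ∨ D v u) {J : Finset (V × Bool)}
    (hJ : IndepF (A14 D) J) : Set.InjOn Prod.fst (J : Set (V × Bool)) := by
  intro p hp q hq h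
  by_contra hne
  exact hJ p hp q hq
    ((underlying_A14_adj_iff hD1 hD2 p q).2 (.inl ⟨h, fun h' => hne (Prod.ext h h')⟩))

theorem IndepF.uIndep_image_fst [DecidableEq V] (hD1 : ∀ u v, D u v → G.Adj u v)
    (hD2 : ∀ u v, G.Adj u v → D u v ∨ D v u) {J : Finset (V × Bool)}
    (hJ : IndepF (A14 D) J) : UIndep G (J.image Prod.fst) := by
  simp only [UIndep, Finset.forall_mem_image]
  exact fun p hp q hq hadj => hJ p hp q hq ((underlying_A14_adj_iff hD1 hD2 p q).2 (.inr hadj))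

theorem reflTransGen_A14_of_uIsStep [DecidableEq V] (hD1 : ∀ u v, D u v → G.Adj u v)
    (hD2 : ∀ u v, G.Adj u v → D u v ∨ D v u) {X Y : Finset V} (hX : UIndep G X)
    (hY : UIndep G Y) (hXY : UIsStep G X Y) :
    Relation.ReflTransGen (ReconfStep (IndepF (A14 D)) (IsStep (A14 D)))
      (X.image fun x => (x, false)) (Y.image fun x => (x, false)) := by
  obtain ⟨u, v, hadj, hstep⟩ := hXY
  obtain ⟨hu, hv, rfl⟩ := sdiff_eq_singleton_and_sdiff_eq_singleton_iff.1 hstep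
  have hXi := (indepF_A14_image_iff hD1 hD2 (fun _ => false) X).2 hX
  have hYi := (indepF_A14_image_iff hD1 hD2 (fun _ => false) _).2 hY
  have hu' : (u, false) ∈ X.image fun x => (x, false) := Finset.mem_image_of_mem _ hu
  rcases hD2 u v hadj with huv | hvu
  · refine .single ⟨hXi, hYi, (u, false), (v, false), .inr (.inl ⟨huv, rfl⟩),
      sdiff_eq_singleton_and_sdiff_eq_singleton_iff.2 ⟨hu', by simpa using hv, ?_⟩⟩
    rw [Finset.image_insert, Finset.image_erase fun _ _ h => congrArg Prod.fst h]
  · set K := X.image fun x => (x, decide (x = u))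
    have hKi : IndepF (A14 D) K := (indepF_A14_image_iff hD1 hD2 _ X).2 hX
    have hK : K = insert (u, true) ((X.image fun x => (x, false)).erase (u, false)) := by
      ext ⟨x, b⟩
      simp only [K, Finset.mem_image, Finset.mem_insert, Finset.mem_erase, Prod.mk.injEq]
      grind
    have hKY : (insert v (X.erase u)).image (fun x => (x, false)) =
        insert (v, false) (K.erase (u, true)) := by
      ext ⟨x, b⟩
      simp only [K, Finset.mem_image, Finset.mem_insert, Finset.mem_erase, Prod.mk.injEq]
      grind
    refine .head ⟨hXi, hKi, (u, false), (u, true), .inl ⟨rfl, rfl, rfl⟩,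
      sdiff_eq_singleton_and_sdiff_eq_singleton_iff.2 ⟨hu', by simp, hK⟩⟩
      (.single ⟨hKi, hYi, (u, true), (v, false), .inr (.inr ⟨hvu, by simp⟩),
        sdiff_eq_singleton_and_sdiff_eq_singleton_iff.2 ⟨by simp [K, hu], by simp [K, hv], hKY⟩⟩)

theorem reflTransGen_image_fst_of_isStep_A14 [DecidableEq V] (hD1 : ∀ u v, D u v → G.Adj u v)
    (hD2 : ∀ u v, G.Adj u v → D u v ∨ D v u) {X Y : Finset (V × Bool)}
    (hX : IndepF (A14 D) X) (hY : IndepF (A14 D) Y) (hXY : IsStep (A14 D) X Y) :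
    Relation.ReflTransGen (ReconfStep (UIndep G) (UIsStep G))
      (X.image Prod.fst) (Y.image Prod.fst) := by
  obtain ⟨p, q, harc, hstep⟩ := hXY
  obtain ⟨hp, hq, rfl⟩ := sdiff_eq_singleton_and_sdiff_eq_singleton_iff.1 hstep
  have hproj :
      (insert q (X.erase p)).image Prod.fst = insert q.1 ((X.image Prod.fst).erase p.1) := by
    rw [Finset.image_insert, Finset.image_erase_of_injOn (hX.injOn_fst hD1 hD2) hp]
  by_cases hpq : p.1 = q.1
  · rw [hproj, ← hpq, Finset.insert_erase (Finset.mem_image_of_mem _ hp)]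
  have hq1 : q.1 ∉ X.image Prod.fst := by
    simp only [Finset.mem_image]
    rintro ⟨r, hr, hrq⟩
    have hrY : r ∈ insert q (X.erase p) :=
      Finset.mem_insert_of_mem (Finset.mem_erase.2 ⟨by rintro rfl; exact hpq hrq, hr⟩)
    obtain rfl := hY.injOn_fst hD1 hD2 hrY (Finset.mem_insert_self q _) hrq
    exact hq hr
  exact .single ⟨hX.uIndep_image_fst hD1 hD2, hY.uIndep_image_fst hD1 hD2, p.1, q.1,
    (A14_fst_eq_or_adj hD1 harc).resolve_left hpq,
    sdiff_eq_singleton_and_sdiff_eq_singleton_iff.2 ⟨Finset.mem_image_of_mem _ hp, hq1, hproj⟩⟩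

end Reduction

theorem stmt_14_general [DecidableEq V] (G : SimpleGraph V) (D : V → V → Prop)
    (hD1 : ∀ u v, D u v → G.Adj u v)
    (hD2 : ∀ u v, G.Adj u v → D u v ∨ D v u)
    (I0 It : Finset V) :
    UReconfigurable G I0 It ↔
      Reconfigurable (A14 D)
        (I0.image fun v => (v, false)) (It.image fun v => (v, false)) := by
  rw [UReconfigurable, exists_fin_seq_iff_reflTransGen]
  simp only [Reconfigurable, IsReconfSeq, and_assoc]
  rw [exists_fin_seq_iff_reflTransGen, indepF_A14_image_iff hD1 hD2 (fun _ => false)]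
  refine and_congr_right fun _ => ⟨fun h => ?_, fun h => ?_⟩
  · exact h.lift' _ fun _ _ hXY =>
      reflTransGen_A14_of_uIsStep hD1 hD2 hXY.1 hXY.2.1 hXY.2.2
  · have h' := h.lift' (Finset.image Prod.fst) fun _ _ hXY =>
      reflTransGen_image_fst_of_isStep_A14 hD1 hD2 hXY.1 hXY.2.1 hXY.2.2
    simpa [Function.onFun, Finset.image_image, Function.comp_def] using h'

/-- Undirected token sliding on `G` is equivalent to directed token
sliding on the oriented graph `G'`, where `D` is any orientation of `G`. -/
theorem stmt_14 [Fintype V] [DecidableEq V] (G : SimpleGraph V) (D : V → V → Prop)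
    (hD1 : ∀ u v, D u v → G.Adj u v)
    (hD2 : ∀ u v, G.Adj u v → D u v ∨ D v u)
    (hD3 : ∀ u v, ¬ (D u v ∧ D v u))
    (I0 It : Finset V) (h0 : UIndep G I0) (ht : UIndep G It)
    (hcard : I0.card = It.card) :
    UReconfigurable G I0 It ↔
      Reconfigurable (A14 D)
        (I0.image fun v => (v, false)) (It.image fun v => (v, false)) :=
  stmt_14_general G D hD1 hD2 I0 It
end

section
/- Let G be an undirected graph with vertex partition {V₁, …, V_k}, and let G' be the DAG with vertex set U ∪ V(G) ∪ W where U = {u₁,…,u_{k+1}}, W = {w₁,…,w_{k+1}}, and arcs: all (u, w) for u ∈ U, w ∈ W; arcs (u_i, v) for i ∈ [k], v ∈ V_i; arcs (v, w_i) for i ∈ [k], v ∈ V_i; plus an acyclic orientation of E(G) in which every edge between V_i and V_j with i < j is directed from V_i to V_j. Then U is reconfigurable into W in G' under directed token sliding if and only if G has an independent set containing exactly one vertex from each V_i. -/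
/-!
Given a multicolored independent set `{g 0, …, g (k - 1)}` with `g j ∈ V_j`, slide
`u_j → g j` for every `j < k`, then `u_k → w_k`, then `g j → w_j` for every `j < k`.
Counting `u_i` and `w_i` in class `i`, every intermediate configuration has one token per
class and never occupies `U` and `W` at once, so it is independent.

Conversely, tokens never leave `W`, and `U` and `W` are never occupied at once, so exactly
one step slides a token from `U` to `W`; as `u_k` has out-neighbours only in `W` and `w_k`
has in-neighbours only in `U`, that step is `u_k → w_k`. Every other arc goes from a class
`i` to a class `≥ i`, so the sum of the classes of the tokens never decreases; since it is
the same for `U` and for `W`, no step changes the class of a token. Just before the step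
`u_k → w_k`, the other `k` tokens thus lie in `V`, one in each `V_i`, and they are
independent.
-/

open scoped Classical

variable {V : Type*}

/-- The DAG `G'` of the reduction from Multicolored Independent Set:
vertices `U ⊕ V(G) ⊕ W` with `|U| = |W| = k + 1`; all arcs from `U` to `W`;
arcs `(u_i, v)` and `(v, w_i)` for `v ∈ V_i` (`i ∈ [k]`, encoded by `Vc v = i`);
and an orientation `D` of the edges of `G`. -/
def A15 {V : Type*} (k : ℕ) (Vc : V → Fin k) (D : V → V → Prop) :
    Fin (k + 1) ⊕ V ⊕ Fin (k + 1) → Fin (k + 1) ⊕ V ⊕ Fin (k + 1) → Prop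
  | Sum.inl _, Sum.inr (Sum.inr _) => True
  | Sum.inl i, Sum.inr (Sum.inl v) => ∃ j : Fin k, i = j.castSucc ∧ Vc v = j
  | Sum.inr (Sum.inl v), Sum.inr (Sum.inr i) => ∃ j : Fin k, i = j.castSucc ∧ Vc v = j
  | Sum.inr (Sum.inl u), Sum.inr (Sum.inl v) => D u v
  | _, _ => False

theorem Nat.exists_not_and_succ_of_le {p : ℕ → Prop} {a b : ℕ} (hab : a ≤ b)
    (ha : ¬ p a) (hb : p b) : ∃ m, a ≤ m ∧ m < b ∧ ¬ p m ∧ p (m + 1) := by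
  induction b, hab using Nat.le_induction with
  | base => exact absurd hb ha
  | succ b hab ih =>
    by_cases hpb : p b
    · obtain ⟨m, ham, hmb, hm⟩ := ih hpb
      exact ⟨m, ham, hmb.trans (Nat.lt_succ_self b), hm⟩
    · exact ⟨b, hab, Nat.lt_succ_self b, hpb, hb⟩

section Exchange
variable {α : Type*} [DecidableEq α] {I J : Finset α} {x y : α}

theorem Finset.sum_add_eq_sum_add_of_sdiff_eq_singleton {M : Type*} [AddCommMonoid M]
    (hIJ : I \ J = {x}) (hJI : J \ I = {y}) (f : α → M) :
    ∑ z ∈ J, f z + f x = ∑ z ∈ I, f z + f y := by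
  have hI := Finset.sum_sdiff (f := f) (Finset.inter_subset_left : I ∩ J ⊆ I)
  have hJ := Finset.sum_sdiff (f := f) (Finset.inter_subset_left : J ∩ I ⊆ J)
  rw [Finset.sdiff_inter_self_left, hIJ, Finset.sum_singleton] at hI
  rw [Finset.sdiff_inter_self_left, hJI, Finset.sum_singleton, Finset.inter_comm] at hJ
  rw [← hI, ← hJ]
  abel

theorem Finset.card_filter_eq_of_sdiff_eq_singleton (hIJ : I \ J = {x}) (hJI : J \ I = {y})
    (p : α → Prop) [DecidablePred p] (hp : p x ↔ p y) :
    (J.filter p).card = (I.filter p).card := by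
  have h := Finset.sum_add_eq_sum_add_of_sdiff_eq_singleton hIJ hJI
    fun z => if p z then 1 else 0
  simp only [hp, ← Finset.card_filter] at h
  exact Nat.add_right_cancel h

theorem Finset.univ_image_sdiff_univ_image {ι : Type*} [Fintype ι] {p q : ι → α}
    (hp : Function.Injective p) {t : ι} (hpq : ∀ i ≠ t, p i = q i) (ht : p t ≠ q t) :
    Finset.univ.image p \ Finset.univ.image q = {p t} := by
  ext z
  simp only [Finset.mem_sdiff, Finset.mem_image, Finset.mem_univ, true_and,
    Finset.mem_singleton, not_exists]
  constructor
  · rintro ⟨⟨i, rfl⟩, hz⟩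
    by_contra hit
    exact hz i (hpq i (fun h => hit (h ▸ rfl))).symm
  · rintro rfl
    refine ⟨⟨t, rfl⟩, fun i hi => ?_⟩
    by_cases hit : i = t
    · exact ht (hit ▸ hi).symm
    · exact hit (hp ((hpq i hit).trans hi))

end Exchange

section Reconfiguration
variable {α : Type*} {A : α → α → Prop} {I J : Finset α} {x y : α}

theorem IndepF.not_arc (h : IndepF A I) (hx : x ∈ I) (hy : y ∈ I) (hne : x ≠ y) : ¬ A x y :=
  fun hxy => h x hx y hy ((SimpleGraph.fromRel_adj A x y).2 ⟨hne, Or.inl hxy⟩)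

theorem indepF_of_forall_not_arc (h : ∀ x ∈ I, ∀ y ∈ I, ¬ A x y) : IndepF A I := by
  intro x hx y hy hxy
  obtain ⟨-, hxy | hyx⟩ := (SimpleGraph.fromRel_adj A x y).1 hxy
  exacts [h x hx y hy hxy, h y hy x hx hyx]

variable [DecidableEq α]

theorem IsStep.mem_of_forall_not_arc (h : IsStep A I J) (hx : x ∈ I) (hout : ∀ y, ¬ A x y) :
    x ∈ J := by
  obtain ⟨u, v, huv, hIJ, -⟩ := h
  by_contra hxJ
  have hxu : x ∈ I \ J := Finset.mem_sdiff.2 ⟨hx, hxJ⟩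
  rw [hIJ, Finset.mem_singleton] at hxu
  exact hout v (hxu ▸ huv)

theorem IsStep.exists_arc_out_of_mem_sdiff (h : IsStep A I J) (hx : x ∈ I \ J) :
    ∃ y ∈ J, A x y := by
  obtain ⟨u, v, huv, hIJ, hJI⟩ := h
  rw [hIJ, Finset.mem_singleton] at hx
  exact ⟨v, (Finset.mem_sdiff.1 (hJI ▸ Finset.mem_singleton_self v)).1, hx ▸ huv⟩

theorem IsStep.exists_arc_in_of_mem_sdiff (h : IsStep A I J) (hy : y ∈ J \ I) :
    ∃ x ∈ I, A x y := by
  obtain ⟨u, v, huv, hIJ, hJI⟩ := h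
  rw [hJI, Finset.mem_singleton] at hy
  exact ⟨u, (Finset.mem_sdiff.1 (hIJ ▸ Finset.mem_singleton_self u)).1, hy ▸ huv⟩

theorem isStep_univ_image {ι : Type*} [Fintype ι] {p q : ι → α} (hp : Function.Injective p)
    (hq : Function.Injective q) {t : ι} (hpq : ∀ i ≠ t, p i = q i) (ht : p t ≠ q t)
    (harc : A (p t) (q t)) : IsStep A (Finset.univ.image p) (Finset.univ.image q) :=
  ⟨p t, q t, harc, Finset.univ_image_sdiff_univ_image hp hpq ht,
    Finset.univ_image_sdiff_univ_image hq (fun i hi => (hpq i hi).symm) ht.symm⟩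

structure IsReconfChain (A : α → α → Prop) (N : ℕ) (c : ℕ → Finset α) : Prop where
  indepF : ∀ n ≤ N, IndepF A (c n)
  isStep : ∀ n < N, IsStep A (c n) (c (n + 1))

theorem reconfigurable_iff_exists_isReconfChain :
    Reconfigurable A I J ↔ ∃ N c, IsReconfChain A N c ∧ c 0 = I ∧ c N = J := by
  constructor
  · rintro ⟨ℓ, f, ⟨hind, hstep⟩, h0, hℓ⟩
    refine ⟨ℓ, fun n => f ⟨min n ℓ, by omega⟩, ⟨fun n _ => hind _, fun n hn => ?_⟩,
      ?_, ?_⟩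
    · convert hstep ⟨n, hn⟩ using 2 <;> ext <;> simp <;> omega
    · simpa using h0
    · convert hℓ
      simp [Fin.last]
  · rintro ⟨N, c, hc, h0, hN⟩
    exact ⟨N, fun i => c i, ⟨fun i => hc.indepF i (by omega), fun i => hc.isStep i i.2⟩,
      by simpa using h0, hN⟩

theorem IsReconfChain.mem_of_le_of_forall_not_arc {c : ℕ → Finset α} {N : ℕ}
    (hc : IsReconfChain A N c) (hout : ∀ y, ¬ A x y) {m n : ℕ} (hmn : m ≤ n) (hn : n ≤ N)
    (hx : x ∈ c m) : x ∈ c n := by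
  induction n, hmn using Nat.le_induction with
  | base => exact hx
  | succ n _ ih => exact (hc.isStep n hn).mem_of_forall_not_arc (ih (by omega)) hout

theorem IsReconfChain.sum_le_sum {c : ℕ → Finset α} {N : ℕ} (hc : IsReconfChain A N c)
    (s : α → ℕ) (hmono : ∀ n < N, ∀ x y, A x y → c n \ c (n + 1) = {x} →
      c (n + 1) \ c n = {y} → s x ≤ s y)
    {m n : ℕ} (hmn : m ≤ n) (hn : n ≤ N) : ∑ z ∈ c m, s z ≤ ∑ z ∈ c n, s z := by
  induction n, hmn using Nat.le_induction with
  | base => exact le_rfl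
  | succ n _ ih =>
    obtain ⟨x, y, harc, hxy, hyx⟩ := hc.isStep n hn
    have hsum := Finset.sum_add_eq_sum_add_of_sdiff_eq_singleton hxy hyx s
    have := hmono n hn x y harc hxy hyx
    have := ih (by omega)
    omega

/-- `∑ z ∈ c n, s z` is monotone in `n` with equal ends, hence constant, so every step
preserves `s`. -/
theorem IsReconfChain.card_filter_eq {c : ℕ → Finset α} {N : ℕ} (hc : IsReconfChain A N c)
    (s : α → ℕ) (hmono : ∀ n < N, ∀ x y, A x y → c n \ c (n + 1) = {x} →
      c (n + 1) \ c n = {y} → s x ≤ s y)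
    (hends : ∑ z ∈ c N, s z ≤ ∑ z ∈ c 0, s z) {n : ℕ} (hn : n ≤ N) (t : ℕ) :
    ((c n).filter (s · = t)).card = ((c 0).filter (s · = t)).card := by
  induction n with
  | zero => rfl
  | succ m ih =>
    obtain ⟨x, y, harc, hxy, hyx⟩ := hc.isStep m (by omega)
    have hsxy : s x = s y := by
      have hsum := Finset.sum_add_eq_sum_add_of_sdiff_eq_singleton hxy hyx s
      have := hc.sum_le_sum s hmono (Nat.zero_le m) (by omega)
      have := hc.sum_le_sum s hmono hn le_rfl
      have := hmono m (by omega) x y harc hxy hyx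
      omega
    rw [Finset.card_filter_eq_of_sdiff_eq_singleton hxy hyx _ (by rw [hsxy]), ih (by omega)]

end Reconfiguration

section A15
variable {V : Type*} {k : ℕ} {Vc : V → Fin k} {D : V → V → Prop}

def partIndex (Vc : V → Fin k) : Fin (k + 1) ⊕ V ⊕ Fin (k + 1) → ℕ
  | Sum.inl i => i
  | Sum.inr (Sum.inl v) => Vc v
  | Sum.inr (Sum.inr i) => i

theorem A15_cases {a b : Fin (k + 1) ⊕ V ⊕ Fin (k + 1)} (h : A15 k Vc D a b) :
    (∃ i j, a = Sum.inl i ∧ b = Sum.inr (Sum.inr j)) ∨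
      (∃ u v, a = Sum.inr (Sum.inl u) ∧ b = Sum.inr (Sum.inl v) ∧ D u v) ∨
      (partIndex Vc a = partIndex Vc b ∧ a ≠ b) := by
  rcases a with i | u | i <;> rcases b with j | v | j <;> simp only [A15] at h
  · exact Or.inr (Or.inr ⟨by obtain ⟨j, rfl, rfl⟩ := h; rfl, nofun⟩)
  · exact Or.inl ⟨i, j, rfl, rfl⟩
  · exact Or.inr (Or.inl ⟨u, v, rfl, rfl, h⟩)
  · exact Or.inr (Or.inr ⟨by obtain ⟨j, rfl, rfl⟩ := h; rfl, nofun⟩)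

theorem A15_not_arc_from_inr_inr {j : Fin (k + 1)} (b : Fin (k + 1) ⊕ V ⊕ Fin (k + 1)) :
    ¬ A15 k Vc D (Sum.inr (Sum.inr j)) b := by
  rcases b with i | v | i <;> simp [A15]

theorem A15_last_out {b : Fin (k + 1) ⊕ V ⊕ Fin (k + 1)}
    (h : A15 k Vc D (Sum.inl (Fin.last k)) b) : ∃ j, b = Sum.inr (Sum.inr j) := by
  rcases b with i | v | j
  · simp [A15] at h
  · obtain ⟨j, hj, -⟩ := h
    exact absurd hj (Fin.castSucc_ne_last j).symm
  · exact ⟨j, rfl⟩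

theorem A15_last_in {a : Fin (k + 1) ⊕ V ⊕ Fin (k + 1)}
    (h : A15 k Vc D a (Sum.inr (Sum.inr (Fin.last k)))) : ∃ i, a = Sum.inl i := by
  rcases a with i | v | i
  · exact ⟨i, rfl⟩
  · obtain ⟨j, hj, -⟩ := h
    exact absurd hj (Fin.castSucc_ne_last j).symm
  · simp [A15] at h

end A15

section Forward
variable {V : Type*} {G : SimpleGraph V} {k : ℕ} {Vc : V → Fin k}
  {D : V → V → Prop} {S : Finset V} {g : Fin k → V}

/-- Position of each of the `k + 1` tokens at time `n`: token `j < k` slides `u_j → g j` at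
time `j` and `g j → w_j` at time `k + 1 + j`, while token `k` slides `u_k → w_k` at time `k`. -/
def tokenPos (g : Fin k → V) (n : ℕ) : Fin (k + 1) → Fin (k + 1) ⊕ V ⊕ Fin (k + 1) :=
  Fin.lastCases (if n ≤ k then Sum.inl (Fin.last k) else Sum.inr (Sum.inr (Fin.last k)))
    fun j => if n ≤ j then Sum.inl j.castSucc
      else if n ≤ k + 1 + j then Sum.inr (Sum.inl (g j)) else Sum.inr (Sum.inr j.castSucc)

theorem tokenPos_castSucc (n : ℕ) (j : Fin k) : tokenPos g n j.castSucc =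
    if n ≤ j then Sum.inl j.castSucc
    else if n ≤ k + 1 + j then Sum.inr (Sum.inl (g j)) else Sum.inr (Sum.inr j.castSucc) :=
  Fin.lastCases_castSucc _

theorem tokenPos_last (n : ℕ) : tokenPos g n (Fin.last k) =
    if n ≤ k then Sum.inl (Fin.last k) else Sum.inr (Sum.inr (Fin.last k)) :=
  Fin.lastCases_last

theorem partIndex_tokenPos (hgc : ∀ j, Vc (g j) = j) (n : ℕ) (t : Fin (k + 1)) :
    partIndex Vc (tokenPos g n t) = t := by
  cases t using Fin.lastCases <;> simp only [tokenPos_last, tokenPos_castSucc] <;>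
    split_ifs <;> simp [partIndex, hgc]

theorem tokenPos_injective (hgc : ∀ j, Vc (g j) = j) (n : ℕ) :
    Function.Injective (tokenPos g n) := fun a b h =>
  Fin.ext (by simpa only [partIndex_tokenPos hgc] using congrArg (partIndex Vc) h)

theorem le_of_tokenPos_eq_inl {n : ℕ} {t i : Fin (k + 1)}
    (h : tokenPos g n t = Sum.inl i) : n ≤ k := by
  cases t using Fin.lastCases <;> simp only [tokenPos_last, tokenPos_castSucc] at h <;>
    split_ifs at h <;> omega

theorem lt_of_tokenPos_eq_inr_inr {n : ℕ} {t i : Fin (k + 1)}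
    (h : tokenPos g n t = Sum.inr (Sum.inr i)) : k < n := by
  cases t using Fin.lastCases <;> simp only [tokenPos_last, tokenPos_castSucc] at h <;>
    split_ifs at h <;> first | omega | cases h

theorem exists_of_tokenPos_eq_inr_inl {n : ℕ} {t : Fin (k + 1)} {v : V}
    (h : tokenPos g n t = Sum.inr (Sum.inl v)) : ∃ j, g j = v := by
  cases t using Fin.lastCases <;> simp only [tokenPos_last, tokenPos_castSucc] at h <;>
    split_ifs at h <;> simp only [Sum.inr.injEq, Sum.inl.injEq, reduceCtorEq] at h
  exact ⟨_, h⟩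

theorem tokenPos_zero : tokenPos g 0 = Sum.inl := by
  funext t
  cases t using Fin.lastCases <;> simp [tokenPos]

theorem tokenPos_two_mul_add_one : tokenPos g (2 * k + 1) = fun t => Sum.inr (Sum.inr t) := by
  funext t
  cases t using Fin.lastCases <;> simp only [tokenPos_last, tokenPos_castSucc] <;>
    split_ifs <;> first | rfl | omega

variable [DecidableEq V]

theorem indepF_tokenPos (hD1 : ∀ u v, D u v → G.Adj u v) (hS : UIndep G S)
    (hgS : ∀ j, g j ∈ S) (hgc : ∀ j, Vc (g j) = j) (n : ℕ) :
    IndepF (A15 k Vc D) (Finset.univ.image (tokenPos g n)) := by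
  refine indepF_of_forall_not_arc ?_
  simp only [Finset.mem_image, Finset.mem_univ, true_and]
  rintro _ ⟨a, rfl⟩ _ ⟨b, rfl⟩ hab
  rcases A15_cases hab with ⟨i, j, ha, hb⟩ | ⟨u, v, ha, hb, huv⟩ | ⟨hidx, hne⟩
  · exact absurd (le_of_tokenPos_eq_inl ha) (lt_of_tokenPos_eq_inr_inr hb).not_ge
  · obtain ⟨i, rfl⟩ := exists_of_tokenPos_eq_inr_inl ha
    obtain ⟨j, rfl⟩ := exists_of_tokenPos_eq_inr_inl hb
    exact hS _ (hgS i) _ (hgS j) (hD1 _ _ huv)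
  · rw [partIndex_tokenPos hgc, partIndex_tokenPos hgc, Fin.val_inj] at hidx
    exact hne (congrArg _ hidx)

theorem isStep_tokenPos_castSucc (hgc : ∀ j, Vc (g j) = j) (j : Fin k) :
    IsStep (A15 k Vc D) (Finset.univ.image (tokenPos g j))
      (Finset.univ.image (tokenPos g (j + 1))) := by
  refine isStep_univ_image (tokenPos_injective hgc _) (tokenPos_injective hgc _)
    (t := j.castSucc) (fun i hi => ?_) ?_ ?_
  · cases i using Fin.lastCases with
    | last => simp only [tokenPos_last]; split_ifs <;> first | rfl | omega
    | cast i =>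
      have hij : (i : ℕ) ≠ j := fun h => hi (congrArg _ (Fin.ext h))
      simp only [tokenPos_castSucc]; split_ifs <;> first | rfl | omega
  · rw [tokenPos_castSucc, tokenPos_castSucc, if_pos le_rfl, if_neg (by omega),
      if_pos (by omega)]
    exact Sum.inl_ne_inr
  · rw [tokenPos_castSucc, tokenPos_castSucc, if_pos le_rfl, if_neg (by omega),
      if_pos (by omega)]
    exact ⟨_, rfl, hgc _⟩

theorem isStep_tokenPos_last (hgc : ∀ j, Vc (g j) = j) :
    IsStep (A15 k Vc D) (Finset.univ.image (tokenPos g k))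
      (Finset.univ.image (tokenPos g (k + 1))) := by
  refine isStep_univ_image (tokenPos_injective hgc _) (tokenPos_injective hgc _)
    (t := Fin.last k) (fun i hi => ?_) ?_ ?_
  · cases i using Fin.lastCases with
    | last => exact absurd rfl hi
    | cast i => simp only [tokenPos_castSucc]; split_ifs <;> first | rfl | omega
  · rw [tokenPos_last, tokenPos_last, if_pos le_rfl, if_neg (by omega)]
    exact Sum.inl_ne_inr
  · rw [tokenPos_last, tokenPos_last, if_pos le_rfl, if_neg (by omega)]
    trivial

theorem isStep_tokenPos_castSucc_add (hgc : ∀ j, Vc (g j) = j) (j : Fin k) :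
    IsStep (A15 k Vc D) (Finset.univ.image (tokenPos g (k + 1 + j)))
      (Finset.univ.image (tokenPos g (k + 1 + j + 1))) := by
  refine isStep_univ_image (tokenPos_injective hgc _) (tokenPos_injective hgc _)
    (t := j.castSucc) (fun i hi => ?_) ?_ ?_
  · cases i using Fin.lastCases with
    | last => simp only [tokenPos_last]; split_ifs <;> first | rfl | omega
    | cast i =>
      have hij : (i : ℕ) ≠ j := fun h => hi (congrArg _ (Fin.ext h))
      simp only [tokenPos_castSucc]; split_ifs <;> first | rfl | omega
  · rw [tokenPos_castSucc, tokenPos_castSucc, if_neg (by omega), if_pos le_rfl,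
      if_neg (by omega), if_neg (by omega)]
    simp
  · rw [tokenPos_castSucc, tokenPos_castSucc, if_neg (by omega), if_pos le_rfl,
      if_neg (by omega), if_neg (by omega)]
    exact ⟨_, rfl, hgc _⟩

theorem isStep_tokenPos (hgc : ∀ j, Vc (g j) = j) {n : ℕ} (hn : n < 2 * k + 1) :
    IsStep (A15 k Vc D) (Finset.univ.image (tokenPos g n))
      (Finset.univ.image (tokenPos g (n + 1))) := by
  rcases lt_trichotomy n k with hnk | rfl | hkn
  · exact isStep_tokenPos_castSucc hgc ⟨n, hnk⟩
  · exact isStep_tokenPos_last hgc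
  · obtain ⟨j, rfl⟩ : ∃ j : Fin k, n = k + 1 + j :=
      ⟨⟨n - (k + 1), by omega⟩, by dsimp only; omega⟩
    exact isStep_tokenPos_castSucc_add hgc j

theorem reconfigurable_of_multicolored (hD1 : ∀ u v, D u v → G.Adj u v) (hS : UIndep G S)
    (hgS : ∀ j, g j ∈ S) (hgc : ∀ j, Vc (g j) = j) :
    Reconfigurable (A15 k Vc D)
      ((Finset.univ : Finset (Fin (k + 1))).image fun i =>
        (Sum.inl i : Fin (k + 1) ⊕ V ⊕ Fin (k + 1)))
      ((Finset.univ : Finset (Fin (k + 1))).image fun i =>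
        (Sum.inr (Sum.inr i) : Fin (k + 1) ⊕ V ⊕ Fin (k + 1))) := by
  refine reconfigurable_iff_exists_isReconfChain.2
    ⟨2 * k + 1, fun n => Finset.univ.image (tokenPos g n),
      ⟨fun n _ => indepF_tokenPos hD1 hS hgS hgc n, fun n hn => isStep_tokenPos hgc hn⟩,
      ?_, ?_⟩
  · simp only [tokenPos_zero]
  · simp only [tokenPos_two_mul_add_one]

end Forward

section Backward
variable {V : Type*} [DecidableEq V] {k : ℕ} {Vc : V → Fin k} {D : V → V → Prop} {N : ℕ}
  {c : ℕ → Finset (Fin (k + 1) ⊕ V ⊕ Fin (k + 1))}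

theorem IsReconfChain.not_inl_mem_and_inr_inr_mem (hc : IsReconfChain (A15 k Vc D) N c)
    {n : ℕ} (hn : n ≤ N) {i j : Fin (k + 1)} (hi : Sum.inl i ∈ c n)
    (hj : Sum.inr (Sum.inr j) ∈ c n) : False :=
  (hc.indepF n hn).not_arc hi hj Sum.inl_ne_inr trivial

theorem IsReconfChain.exists_step_last_to_last (hc : IsReconfChain (A15 k Vc D) N c)
    (h0 : c 0 = Finset.univ.image Sum.inl)
    (hN : c N = Finset.univ.image fun i => Sum.inr (Sum.inr i)) :
    ∃ n₀ < N, (∀ j, Sum.inr (Sum.inr j) ∉ c n₀) ∧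
      c n₀ \ c (n₀ + 1) = {Sum.inl (Fin.last k)} ∧
      c (n₀ + 1) \ c n₀ = {Sum.inr (Sum.inr (Fin.last k))} := by
  have hpersist {j : Fin (k + 1)} {m n : ℕ} (hmn : m ≤ n) (hn : n ≤ N)
      (h : Sum.inr (Sum.inr j) ∈ c m) : Sum.inr (Sum.inr j) ∈ c n :=
    hc.mem_of_le_of_forall_not_arc A15_not_arc_from_inr_inr hmn hn h
  obtain ⟨n₀, -, hn₀, hWn₀, j, hj⟩ := Nat.exists_not_and_succ_of_le (Nat.zero_le N)
    (p := fun n => ∃ j, Sum.inr (Sum.inr j) ∈ c n) (by simp [h0]) ⟨0, by simp [hN]⟩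
  have hu : Sum.inl (Fin.last k) ∈ c n₀ := by
    by_contra hu
    obtain ⟨m, -, hm, hum, hum'⟩ := Nat.exists_not_and_succ_of_le (Nat.zero_le n₀)
      (p := fun n => Sum.inl (Fin.last k) ∉ c n) (by simp [h0]) hu
    obtain ⟨y, hy, harc⟩ := (hc.isStep m (by omega)).exists_arc_out_of_mem_sdiff
      (Finset.mem_sdiff.2 ⟨not_not.1 hum, hum'⟩)
    obtain ⟨j', rfl⟩ := A15_last_out harc
    exact hWn₀ ⟨j', hpersist (by omega) (by omega) hy⟩
  have hw : Sum.inr (Sum.inr (Fin.last k)) ∈ c (n₀ + 1) := by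
    by_contra hw
    obtain ⟨m, hm₀, hm, hwm, hwm'⟩ :=
      Nat.exists_not_and_succ_of_le (show n₀ + 1 ≤ N by omega)
      (p := fun n => Sum.inr (Sum.inr (Fin.last k)) ∈ c n) hw (by simp [hN])
    obtain ⟨x, hx, harc⟩ := (hc.isStep m hm).exists_arc_in_of_mem_sdiff
      (Finset.mem_sdiff.2 ⟨hwm', hwm⟩)
    obtain ⟨i, rfl⟩ := A15_last_in harc
    exact hc.not_inl_mem_and_inr_inr_mem hm.le hx (hpersist hm₀ hm.le hj)
  obtain ⟨x, y, -, hxy, hyx⟩ := hc.isStep n₀ hn₀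
  have hux : Sum.inl (Fin.last k) ∈ c n₀ \ c (n₀ + 1) :=
    Finset.mem_sdiff.2 ⟨hu, fun h => hc.not_inl_mem_and_inr_inr_mem hn₀ h hj⟩
  have hwy : Sum.inr (Sum.inr (Fin.last k)) ∈ c (n₀ + 1) \ c n₀ :=
    Finset.mem_sdiff.2 ⟨hw, fun h => hWn₀ ⟨_, h⟩⟩
  rw [hxy, Finset.mem_singleton] at hux
  rw [hyx, Finset.mem_singleton] at hwy
  exact ⟨n₀, hn₀, fun j h => hWn₀ ⟨j, h⟩, hux ▸ hxy, hwy ▸ hyx⟩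

theorem IsReconfChain.partIndex_le (hDord : ∀ u v, D u v → Vc u ≤ Vc v)
    (hc : IsReconfChain (A15 k Vc D) N c) {n₀ : ℕ} (hn₀ : n₀ < N)
    (hW : ∀ j, Sum.inr (Sum.inr j) ∉ c n₀)
    (hx₀ : c n₀ \ c (n₀ + 1) = {Sum.inl (Fin.last k)})
    (hy₀ : c (n₀ + 1) \ c n₀ = {Sum.inr (Sum.inr (Fin.last k))}) {n : ℕ} (hn : n < N)
    {x y : Fin (k + 1) ⊕ V ⊕ Fin (k + 1)} (harc : A15 k Vc D x y)
    (hxy : c n \ c (n + 1) = {x}) (hyx : c (n + 1) \ c n = {y}) :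
    partIndex Vc x ≤ partIndex Vc y := by
  rcases A15_cases harc with ⟨i, j, rfl, rfl⟩ | ⟨u, v, rfl, rfl, huv⟩ | ⟨hxy, -⟩
  · have hi : Sum.inl i ∈ c n := (Finset.mem_sdiff.1 (hxy ▸ Finset.mem_singleton_self _)).1
    have hj : Sum.inr (Sum.inr j) ∈ c (n + 1) :=
      (Finset.mem_sdiff.1 (hyx ▸ Finset.mem_singleton_self _)).1
    have hwlast : Sum.inr (Sum.inr (Fin.last k)) ∈ c (n₀ + 1) :=
      (Finset.mem_sdiff.1 (hy₀ ▸ Finset.mem_singleton_self _)).1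
    obtain rfl : n = n₀ := by
      by_contra hne
      rcases Nat.lt_or_gt_of_ne hne with hlt | hgt
      · exact hW j (hc.mem_of_le_of_forall_not_arc A15_not_arc_from_inr_inr hlt hn₀.le hj)
      · exact hc.not_inl_mem_and_inr_inr_mem hn.le hi
          (hc.mem_of_le_of_forall_not_arc A15_not_arc_from_inr_inr hgt hn.le hwlast)
    rw [hx₀, Finset.singleton_inj, Sum.inl.injEq] at hxy
    rw [hy₀, Finset.singleton_inj, Sum.inr.injEq, Sum.inr.injEq] at hyx
    simp [partIndex, ← hxy, ← hyx]
  · exact hDord u v huv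
  · exact hxy.le

theorem IsReconfChain.card_filter_partIndex_eq_one (hDord : ∀ u v, D u v → Vc u ≤ Vc v)
    (hc : IsReconfChain (A15 k Vc D) N c) (h0 : c 0 = Finset.univ.image Sum.inl)
    (hN : c N = Finset.univ.image fun i => Sum.inr (Sum.inr i)) {n₀ : ℕ} (hn₀ : n₀ < N)
    (hW : ∀ j, Sum.inr (Sum.inr j) ∉ c n₀)
    (hx₀ : c n₀ \ c (n₀ + 1) = {Sum.inl (Fin.last k)})
    (hy₀ : c (n₀ + 1) \ c n₀ = {Sum.inr (Sum.inr (Fin.last k))}) (j : Fin k) :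
    ((c n₀).filter (partIndex Vc · = j)).card = 1 := by
  rw [hc.card_filter_eq (partIndex Vc)
      (fun n hn x y => hc.partIndex_le hDord hn₀ hW hx₀ hy₀ hn) (le_of_eq ?_) hn₀.le, h0,
    Finset.filter_image,
    Finset.card_image_of_injective _ Sum.inl_injective, Finset.card_eq_one]
  · exact ⟨j.castSucc, by ext i; rw [Finset.mem_filter]; simp [partIndex, Fin.ext_iff]⟩
  · rw [h0, hN, Finset.sum_image (fun _ _ _ _ h => Sum.inl_injective h),
      Finset.sum_image (fun _ _ _ _ h => Sum.inr_injective (Sum.inr_injective h))]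
    rfl

theorem IsReconfChain.exists_multicolored {G : SimpleGraph V}
    (hD2 : ∀ u v, G.Adj u v → D u v ∨ D v u) (hDord : ∀ u v, D u v → Vc u ≤ Vc v)
    (hc : IsReconfChain (A15 k Vc D) N c) (h0 : c 0 = Finset.univ.image Sum.inl)
    (hN : c N = Finset.univ.image fun i => Sum.inr (Sum.inr i)) :
    ∃ S : Finset V, UIndep G S ∧ ∀ j : Fin k, ∃! v, v ∈ S ∧ Vc v = j := by
  obtain ⟨n₀, hn₀, hW, hx₀, hy₀⟩ := hc.exists_step_last_to_last h0 hN
  have hU (i : Fin (k + 1)) (hi : Sum.inl i ∈ c n₀) : i = Fin.last k := by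
    by_contra hne
    have hi' : Sum.inl i ∈ c (n₀ + 1) := by
      by_contra h
      have := Finset.mem_sdiff.2 ⟨hi, h⟩
      simp [hx₀, hne] at this
    exact hc.not_inl_mem_and_inr_inr_mem (by omega) hi'
      (Finset.mem_sdiff.1 (hy₀ ▸ Finset.mem_singleton_self _)).1
  have hι : Function.Injective
      fun v : V => (Sum.inr (Sum.inl v) : Fin (k + 1) ⊕ V ⊕ Fin (k + 1)) :=
    Sum.inr_injective.comp Sum.inl_injective
  let S := (c n₀).preimage _ hι.injOn
  refine ⟨S, fun u hu v hv huv => ?_, fun j => ?_⟩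
  · rw [Finset.mem_preimage] at hu hv
    rcases hD2 u v huv with h | h
    · exact (hc.indepF n₀ hn₀.le).not_arc hu hv (by simpa using huv.ne) h
    · exact (hc.indepF n₀ hn₀.le).not_arc hv hu (by simpa using huv.ne') h
  have hfilter : (c n₀).filter (partIndex Vc · = j) =
      (S.filter (Vc · = j)).image fun v => Sum.inr (Sum.inl v) := by
    ext x
    rcases x with i | v | i
    · simp only [Finset.mem_filter, Finset.mem_image, reduceCtorEq, and_false, exists_false,
        iff_false, not_and]
      intro hi
      simp [hU i hi, partIndex, j.isLt.ne']
    · rw [Finset.mem_filter]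
      simp only [S, Finset.mem_image, Finset.mem_filter, Finset.mem_preimage, Sum.inr.injEq,
        Sum.inl.injEq, exists_eq_right, partIndex, Fin.val_inj]
    · simp [hW i]
  have hcard : (S.filter (Vc · = j)).card = 1 := by
    rw [← Finset.card_image_of_injective _ hι, ← hfilter]
    exact hc.card_filter_partIndex_eq_one hDord h0 hN hn₀ hW hx₀ hy₀ j
  simpa using Finset.card_eq_one_iff_existsUnique.1 hcard

end Backward

theorem stmt_15_general [DecidableEq V] (G : SimpleGraph V)
    (k : ℕ) (Vc : V → Fin k) (D : V → V → Prop)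
    (hD1 : ∀ u v, D u v → G.Adj u v)
    (hD2 : ∀ u v, G.Adj u v → D u v ∨ D v u)
    (hDord : ∀ u v, D u v → Vc u ≤ Vc v) :
    Reconfigurable (A15 k Vc D)
        ((Finset.univ : Finset (Fin (k + 1))).image fun i =>
          (Sum.inl i : Fin (k + 1) ⊕ V ⊕ Fin (k + 1)))
        ((Finset.univ : Finset (Fin (k + 1))).image fun i =>
          (Sum.inr (Sum.inr i) : Fin (k + 1) ⊕ V ⊕ Fin (k + 1))) ↔
      ∃ S : Finset V, UIndep G S ∧ ∀ j : Fin k, ∃! v, v ∈ S ∧ Vc v = j := by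
  constructor
  · intro h
    obtain ⟨N, c, hc, h0, hN⟩ := reconfigurable_iff_exists_isReconfChain.1 h
    exact hc.exists_multicolored hD2 hDord h0 hN
  · rintro ⟨S, hS, hSc⟩
    choose g hgS hgc using fun j => (hSc j).exists
    exact reconfigurable_of_multicolored hD1 hS hgS hgc

/-- `U` is reconfigurable into `W` in `G'` under directed token
sliding iff `G` has a multicolored independent set. -/
theorem stmt_15 [Fintype V] [DecidableEq V] (G : SimpleGraph V)
    (k : ℕ) (Vc : V → Fin k) (D : V → V → Prop)
    (hD1 : ∀ u v, D u v → G.Adj u v)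
    (hD2 : ∀ u v, G.Adj u v → D u v ∨ D v u)
    (hD3 : ∀ u v, ¬ (D u v ∧ D v u))
    (hDacyc : ∀ v, ¬ Relation.TransGen D v v)
    (hDord : ∀ u v, D u v → Vc u ≤ Vc v) :
    Reconfigurable (A15 k Vc D)
        ((Finset.univ : Finset (Fin (k + 1))).image fun i =>
          (Sum.inl i : Fin (k + 1) ⊕ V ⊕ Fin (k + 1)))
        ((Finset.univ : Finset (Fin (k + 1))).image fun i =>
          (Sum.inr (Sum.inr i) : Fin (k + 1) ⊕ V ⊕ Fin (k + 1))) ↔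
      ∃ S : Finset V, UIndep G S ∧ ∀ j : Fin k, ∃! v, v ∈ S ∧ Vc v = j :=
  stmt_15_general G k Vc D hD1 hD2 hDord
end

section
/- Let T = (V, A) be a polytree, and suppose X, Y ⊆ V satisfy w(e; X, Y) ≥ 0 for all arcs e ∈ A and there exists an arc e* with w(e*; X, Y) > 0. Let T' be the weakly connected subgraph of T induced by the arcs e with w(e; X, Y) > 0 that contains e*. Then |V(T') ∩ X| = |V(T') ∩ Y|, and T' contains a vertex v ∈ X with no in-neighbor in T' and at least one out-neighbor in T'. -/
open scoped Classical

variable {V : Type*}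

/-!
Write `μ = 𝟙_X - 𝟙_Y`, so that `w(e; X, Y)` is the `μ`-mass of the tail side of `e`, and `μ` has
total mass `0`. At a vertex `v` the sides of the incident edges not containing `v` partition
`V - v`; hence `μ(v)` is the `w`-outflow minus the `w`-inflow at `v`. Summed over `V(T')`, which no
arc of nonzero `w`-value leaves or enters, these flows cancel, giving `|V(T') ∩ X| = |V(T') ∩ Y|`.
Tail sides grow strictly along directed paths, so the positive arc of `T'` with the smallest tail
side leaves a vertex `v` without positive in-arcs; there `μ(v)` is a positive outflow, so `v ∈ X`.
-/

namespace SimpleGraph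

section Tree

variable {G : SimpleGraph V} {u v x : V}

lemma Reachable.reachable_deleteEdges_or (h : G.Reachable u x) (v : V) :
    (G.deleteEdges {s(u, v)}).Reachable u x ∨ (G.deleteEdges {s(u, v)}).Reachable v x := by
  rw [reachable_iff_reflTransGen] at h
  induction h with
  | refl => exact Or.inl .rfl
  | @tail y z _ hyz ih =>
    by_cases he : s(y, z) = s(u, v)
    · rcases Sym2.eq_iff.mp he with ⟨-, rfl⟩ | ⟨-, rfl⟩
      · exact Or.inr .rfl
      · exact Or.inl .rfl
    · have hadj : (G.deleteEdges {s(u, v)}).Adj y z := by simp [hyz, he]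
      exact ih.imp (·.trans hadj.reachable) (·.trans hadj.reachable)

lemma Reachable.exists_adj_reachable_deleteEdges (h : G.Reachable v x) (hx : x ≠ v) :
    ∃ u, G.Adj u v ∧ (G.deleteEdges {s(u, v)}).Reachable u x := by
  obtain ⟨p, hp⟩ := h.some.toPath
  cases p with
  | nil => exact absurd rfl hx
  | @cons _ u _ hvu q =>
    have hv : v ∉ q.support := ((Walk.cons_isPath_iff hvu q).mp hp).2
    refine ⟨u, hvu.symm, reachable_deleteEdges_iff_exists_walk.mpr ⟨q, fun he => hv ?_⟩⟩
    exact q.snd_mem_support_of_mem_edges he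

lemma IsAcyclic.not_reachable_deleteEdges (hG : G.IsAcyclic) (h : G.Adj u v) :
    ¬ (G.deleteEdges {s(u, v)}).Reachable u v :=
  isBridge_iff.mp (isAcyclic_iff_forall_adj_isBridge.mp hG h)

lemma IsAcyclic.eq_of_reachable_deleteEdges (hG : G.IsAcyclic) {u₁ u₂ : V}
    (h₁ : G.Adj u₁ v) (h₂ : G.Adj u₂ v) (hx₁ : (G.deleteEdges {s(u₁, v)}).Reachable u₁ x)
    (hx₂ : (G.deleteEdges {s(u₂, v)}).Reachable u₂ x) : u₁ = u₂ := by
  by_contra hne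
  obtain ⟨q, hq⟩ := reachable_deleteEdges_iff_exists_walk.mp hx₁
  have hv : v ∉ q.support := fun hv =>
    hG.not_reachable_deleteEdges h₁ (reachable_deleteEdges_iff_exists_walk.mpr
      ⟨q.takeUntil v hv, fun he => hq (q.edges_takeUntil_subset_edges hv he)⟩)
  have hvx : (G.deleteEdges {s(u₂, v)}).Reachable v x := by
    refine reachable_deleteEdges_iff_exists_walk.mpr ⟨.cons h₁.symm q, ?_⟩
    rw [Walk.edges_cons, List.mem_cons, not_or]
    refine ⟨fun he => hne ?_, fun he => hv (q.snd_mem_support_of_mem_edges he)⟩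
    exact (Sym2.congr_left.mp (he.trans Sym2.eq_swap)).symm
  exact hG.not_reachable_deleteEdges h₂ (hx₂.trans hvx.symm)

lemma IsTree.reachable_deleteEdges_iff_not (hG : G.IsTree) (h : G.Adj u v) (x : V) :
    (G.deleteEdges {s(u, v)}).Reachable v x ↔ ¬ (G.deleteEdges {s(u, v)}).Reachable u x :=
  ⟨fun hv hu => hG.isAcyclic.not_reachable_deleteEdges h (hu.trans hv.symm),
    ((hG.connected u x).reachable_deleteEdges_or v).resolve_left⟩

end Tree

section SideSum

variable [Fintype V] {M : Type*} [AddCommGroup M] {G : SimpleGraph V} {t u v : V}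

noncomputable def sideSum (G : SimpleGraph V) (f : V → M) (u v : V) : M :=
  ∑ x with (G.deleteEdges {s(u, v)}).Reachable u x, f x

lemma IsTree.sideSum_add_sideSum (hG : G.IsTree) (h : G.Adj u v) (f : V → M) :
    G.sideSum f u v + G.sideSum f v u = ∑ x, f x := by
  rw [sideSum, sideSum, Sym2.eq_swap (a := v)]
  simp_rw [hG.reachable_deleteEdges_iff_not h]
  exact Finset.sum_filter_add_sum_filter_not _ _ _

lemma IsTree.sum_sideSum_neighborFinset (hG : G.IsTree) (f : V → M) (v : V) :
    ∑ u ∈ G.neighborFinset v, G.sideSum f u v = ∑ x, f x - f v := by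
  have hx : ∀ x, ∑ u ∈ G.neighborFinset v,
      (if (G.deleteEdges {s(u, v)}).Reachable u x then f x else 0) =
      if x ≠ v then f x else 0 := by
    intro x
    split_ifs with hxv
    · obtain ⟨u₀, hu₀, hx₀⟩ := (hG.connected v x).exists_adj_reachable_deleteEdges hxv
      rw [Finset.sum_eq_single_of_mem u₀ ((mem_neighborFinset _ _ _).mpr hu₀.symm), if_pos hx₀]
      refine fun u hu hne => if_neg fun hxu => hne ?_
      exact hG.isAcyclic.eq_of_reachable_deleteEdges
        ((mem_neighborFinset _ _ _).mp hu).symm hu₀ hxu hx₀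
    · rw [not_not] at hxv
      subst hxv
      refine Finset.sum_eq_zero fun u hu => if_neg ?_
      exact hG.isAcyclic.not_reachable_deleteEdges ((mem_neighborFinset _ _ _).mp hu).symm
  simp_rw [sideSum, Finset.sum_filter]
  rw [Finset.sum_comm, Finset.sum_congr rfl fun x _ => hx x, ← Finset.sum_filter,
    Finset.filter_ne', Finset.sum_erase_eq_sub (Finset.mem_univ v)]

lemma IsTree.filter_reachable_deleteEdges_ssubset (hG : G.IsTree) (htu : G.Adj t u)
    (huv : G.Adj u v) (htv : t ≠ v) :
    ({x | (G.deleteEdges {s(t, u)}).Reachable t x} : Finset V) ⊂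
      ({x | (G.deleteEdges {s(u, v)}).Reachable u x} : Finset V) := by
  refine (Finset.ssubset_iff_of_subset fun x hx => ?_).mpr ⟨u, ?_, ?_⟩
  · rw [Finset.mem_filter] at hx ⊢
    refine ⟨Finset.mem_univ x, by_contra fun hux => ?_⟩
    have hvx := (hG.reachable_deleteEdges_iff_not huv x).mpr hux
    rw [Sym2.eq_swap] at hvx
    exact htv (hG.isAcyclic.eq_of_reachable_deleteEdges htu huv.symm hx.2 hvx)
  · simp
  · simpa using hG.isAcyclic.not_reachable_deleteEdges htu

end SideSum

end SimpleGraph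

open SimpleGraph

lemma sum_outflow_sub_inflow_eq_zero [Fintype V] {M : Type*} [AddCommGroup M]
    (R : V → V → Prop) (g : V → V → M) (p : V → Prop) [DecidablePred p]
    (hp : ∀ u v, R u v → g u v ≠ 0 → (p u ↔ p v)) :
    ∑ v with p v, (∑ u with R v u, g v u - ∑ u with R u v, g u v) = 0 := by
  simp only [Finset.sum_sub_distrib, Finset.sum_filter, Finset.ite_sum_zero]
  conv_lhs => enter [2]; rw [Finset.sum_comm]
  rw [← Finset.sum_sub_distrib]
  refine Finset.sum_eq_zero fun v _ => ?_
  rw [← Finset.sum_sub_distrib]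
  refine Finset.sum_eq_zero fun u _ => ?_
  by_cases hR : R v u
  · by_cases hg : g v u = 0
    · simp [hg]
    · simp [hR, hp v u hR hg]
  · simp [hR]

section SignedIndicator

variable {X Y : Finset V}

noncomputable def signedIndicator (X Y : Finset V) (x : V) : ℤ :=
  (if x ∈ X then 1 else 0) - (if x ∈ Y then 1 else 0)

lemma mem_of_signedIndicator_pos {x : V} (h : 0 < signedIndicator X Y x) : x ∈ X := by
  by_contra hx
  unfold signedIndicator at h
  split_ifs at h <;> omega

variable [Fintype V]

lemma sum_filter_signedIndicator (X Y : Finset V) (p : V → Prop) [DecidablePred p] :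
    ∑ x with p x, signedIndicator X Y x = ((X.filter p).card : ℤ) - (Y.filter p).card := by
  simp only [signedIndicator, Finset.sum_sub_distrib, ← Finset.sum_filter, Finset.filter_filter,
    Finset.sum_const, nsmul_one, and_comm (a := p _)]
  congr 3 <;> ext <;> simp

lemma sum_signedIndicator (hcard : X.card = Y.card) : ∑ x, signedIndicator X Y x = 0 := by
  simpa [hcard] using sum_filter_signedIndicator X Y fun _ => True

lemma wArc_eq_sideSum [DecidableEq V] (A : V → V → Prop) (X Y : Finset V) (a b : V) :
    wArc A X Y a b = (underlying A).sideSum (signedIndicator X Y) a b := by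
  rw [sideSum, sum_filter_signedIndicator, wArc]
  congr

end SignedIndicator

namespace IsPolytree

variable {A : V → V → Prop}

lemma adj_of_arc (hT : IsPolytree A) {u v : V} (h : A u v) : (underlying A).Adj u v :=
  (fromRel_adj A u v).mpr ⟨fun huv => hT.1 u (huv ▸ h), Or.inl h⟩

variable [Fintype V]

lemma card_filter_inCminus_lt (hT : IsPolytree A) {t u v : V} (htu : A t u) (huv : A u v) :
    (Finset.univ.filter (InCminus A t u)).card < (Finset.univ.filter (InCminus A u v)).card :=
  Finset.card_lt_card <| by
    convert hT.2.2.filter_reachable_deleteEdges_ssubset (hT.adj_of_arc htu)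
      (hT.adj_of_arc huv) fun htv => hT.2.1 u v huv (htv ▸ htu) <;> rfl

lemma exists_source (hT : IsPolytree A) {P : V → V → Prop} (hPA : ∀ u v, P u v → A u v)
    (hP : ∃ u v, P u v) : ∃ u v, P u v ∧ ∀ t, ¬ P t u := by
  obtain ⟨u, v, huv⟩ := hP
  obtain ⟨⟨u, v⟩, huv, hmin⟩ := Finset.exists_min_image ({e | P e.1 e.2} : Finset (V × V))
    (fun e => (Finset.univ.filter (InCminus A e.1 e.2)).card) ⟨(u, v), by simpa using huv⟩
  refine ⟨u, v, by simpa using huv, fun t htu => ?_⟩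
  have hle := hmin (t, u) (by simpa using htu)
  exact (hT.card_filter_inCminus_lt (hPA t u htu) (hPA u v (by simpa using huv))).not_ge hle

variable [DecidableEq V]

lemma neighborFinset_eq (hT : IsPolytree A) (v : V) :
    (underlying A).neighborFinset v = ({u | A v u} : Finset V) ∪ ({u | A u v} : Finset V) := by
  ext u
  rw [mem_neighborFinset, underlying, fromRel_adj, Finset.mem_union, Finset.mem_filter,
    Finset.mem_filter, and_iff_right_of_imp]
  · simp only [Finset.mem_univ, true_and]
  · rintro (h | h) rfl <;> exact hT.1 v h

lemma signedIndicator_eq (hT : IsPolytree A) {X Y : Finset V} (hcard : X.card = Y.card) (v : V) :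
    signedIndicator X Y v = ∑ u with A v u, wArc A X Y v u - ∑ u with A u v, wArc A X Y u v := by
  have hG : (underlying A).IsTree := hT.2.2
  have hsum := hG.sum_sideSum_neighborFinset (signedIndicator X Y) v
  have hdisj : Disjoint ({u | A v u} : Finset V) ({u | A u v} : Finset V) :=
    Finset.disjoint_filter.mpr fun u _ hvu huv => hT.2.1 v u hvu huv
  rw [hT.neighborFinset_eq, Finset.sum_union hdisj, sum_signedIndicator hcard, zero_sub] at hsum
  have hout : ∀ u ∈ ({u | A v u} : Finset V),
      (underlying A).sideSum (signedIndicator X Y) u v = -wArc A X Y v u := fun u hu => by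
    have := hG.sideSum_add_sideSum (hT.adj_of_arc (Finset.mem_filter.mp hu).2)
      (signedIndicator X Y)
    rw [sum_signedIndicator hcard] at this
    rw [wArc_eq_sideSum]
    linear_combination this
  rw [Finset.sum_congr rfl hout, Finset.sum_neg_distrib] at hsum
  simp only [← wArc_eq_sideSum] at hsum
  linear_combination hsum

lemma mem_of_forall_not_wArc_pos (hT : IsPolytree A) {X Y : Finset V} (hcard : X.card = Y.card)
    (hw : ∀ a b, A a b → 0 ≤ wArc A X Y a b) {u v : V}
    (hin : ∀ t, ¬ (A t u ∧ 0 < wArc A X Y t u)) (huv : A u v) (hpos : 0 < wArc A X Y u v) :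
    u ∈ X := by
  refine mem_of_signedIndicator_pos (Y := Y) ?_
  have hin_zero : ∑ t with A t u, wArc A X Y t u = 0 := Finset.sum_eq_zero fun t ht =>
    have htu := (Finset.mem_filter.mp ht).2
    (hw t u htu).antisymm' (not_lt.mp fun h => hin t ⟨htu, h⟩)
  have hout : wArc A X Y u v ≤ ∑ x with A u x, wArc A X Y u x :=
    Finset.single_le_sum (fun x hx => hw u x (Finset.mem_filter.mp hx).2) (by simpa using huv)
  rw [hT.signedIndicator_eq hcard, hin_zero]
  linarith

end IsPolytree

/-- If `w(e; X, Y) ≥ 0` everywhere and `w(e*; X, Y) > 0`, then the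
weakly connected subgraph `T'` spanned by the positive-`w` arcs containing `e*`
satisfies `|V(T') ∩ X| = |V(T') ∩ Y|`, and `T'` has a vertex `v ∈ X` with no
in-neighbor in `T'` and at least one out-neighbor in `T'`. -/
theorem stmt_19 [Fintype V] [DecidableEq V] (A : V → V → Prop) (hT : IsPolytree A)
    (X Y : Finset V) (hcard : X.card = Y.card)
    (hw : ∀ a b, A a b → 0 ≤ wArc A X Y a b)
    (a b : V) (hab : A a b) (hpos : 0 < wArc A X Y a b) :
    ((X.filter fun x =>
        (SimpleGraph.fromRel fun u v => A u v ∧ 0 < wArc A X Y u v).Reachable a x).card =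
      (Y.filter fun x =>
        (SimpleGraph.fromRel fun u v => A u v ∧ 0 < wArc A X Y u v).Reachable a x).card) ∧
    ∃ v, (SimpleGraph.fromRel fun u w => A u w ∧ 0 < wArc A X Y u w).Reachable a v ∧
      v ∈ X ∧ (∀ u, ¬ (A u v ∧ 0 < wArc A X Y u v)) ∧
      ∃ u, A v u ∧ 0 < wArc A X Y v u := by
  set T' := SimpleGraph.fromRel fun u v => A u v ∧ 0 < wArc A X Y u v
  have hclosed : ∀ u v, A u v → wArc A X Y u v ≠ 0 → (T'.Reachable a u ↔ T'.Reachable a v) := by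
    intro u v huv hne
    have hadj : T'.Adj u v := (fromRel_adj _ u v).mpr
      ⟨(hT.adj_of_arc huv).ne, Or.inl ⟨huv, (hw u v huv).lt_of_ne' hne⟩⟩
    exact ⟨fun h => h.trans hadj.reachable, fun h => h.trans hadj.reachable.symm⟩
  refine ⟨?_, ?_⟩
  · have hbal := sum_outflow_sub_inflow_eq_zero A (wArc A X Y) (T'.Reachable a) hclosed
    simp_rw [← hT.signedIndicator_eq hcard, sum_filter_signedIndicator, sub_eq_zero] at hbal
    exact_mod_cast hbal
  · obtain ⟨u, v, ⟨hau, huv, hpos⟩, hsrc⟩ :=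
      hT.exists_source (P := fun u v => T'.Reachable a u ∧ A u v ∧ 0 < wArc A X Y u v)
        (fun _ _ h => h.2.1) ⟨a, b, .rfl, hab, hpos⟩
    have hin : ∀ t, ¬ (A t u ∧ 0 < wArc A X Y t u) := fun t ⟨htu, htpos⟩ =>
      hsrc t ⟨(hclosed t u htu htpos.ne').mpr hau, htu, htpos⟩
    exact ⟨u, hau, hT.mem_of_forall_not_wArc_pos hcard hw hin huv hpos, hin, v, huv, hpos⟩
end
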